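/- (Low values.) For every integer d ≥ 1, every integer n with 0 ≤ n ≤ [d-1]₄/2 belongs to S(d,0); equivalently, PG_d(4) admits, for each such n, a legal truncation removing n+1 points leaving a hyperplane with precisely one point removed. -/

import Mathlib

/-- The field with four elements. -/
abbrev F4 : Type := GaloisField 2 2

/-- The points of the projective space `PG_d(4)` : one-dimensional subspaces of `F4^(d+1)`. -/
abbrev PGPoint (d : ℕ) := Projectivization F4 (Fin (d + 1) → F4)

/-- The set of projective points lying in a given linear subspace `W` of `F4^(d+1)`. -/
def pointsIn {d : ℕ} (W : Submodule F4 (Fin (d + 1) → F4)) : Set (PGPoint d) :=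
  {p | p.submodule ≤ W}

/-- A line of `PG_d(4)` : the set of points contained in some 2-dimensional linear subspace. -/
def IsLine {d : ℕ} (L : Set (PGPoint d)) : Prop :=
  ∃ W : Submodule F4 (Fin (d + 1) → F4), Module.finrank F4 W = 2 ∧ L = pointsIn W

/-- `LegalTrunc D` : removing the point set `D` from `PG_d(4)` is a legal truncation,
i.e. no line has exactly two points outside `D`. -/
def LegalTrunc {d : ℕ} (D : Set (PGPoint d)) : Prop :=
  ∀ L : Set (PGPoint d), IsLine L → (L \ D).ncard ≠ 2

/-- `bracket4 e = [e]₄ = 1 + 4 + 4² + ⋯ + 4^e`. -/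
def bracket4 (e : ℕ) : ℕ := ∑ i ∈ Finset.range (e + 1), 4 ^ i

/-- `TT d i` (the set `T(d,i)` of the paper): the set of integers `n` such that `PG_d(4)`
admits a legal truncation removing `n` points, in which some hyperplane `H` has
removed-point set exactly the point set of a copy of `PG_i(4)` contained in `H`. -/
def TT (d i : ℕ) : Set ℕ :=
  {n | ∃ D : Set (PGPoint d), LegalTrunc D ∧ D.ncard = n ∧
    ∃ H W : Submodule F4 (Fin (d + 1) → F4),
      Module.finrank F4 H = d ∧ Module.finrank F4 W = i + 1 ∧ W ≤ H ∧
        D ∩ pointsIn H = pointsIn W}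

/-- `SS d i = S(d,i) = T(d,i) - [i]₄` (every element of `T(d,i)` is at least `[i]₄`). -/
def SS (d i : ℕ) : Set ℕ := {m | m + bracket4 i ∈ TT d i}

/-!
Let `H = {x₀ = 0}`, identify `PG_d(4) \ H` with `AG(d,4) = F4^d`, and remove the point `P ∈ H` at
infinity of a direction `e` together with a set `A ⊆ AG(d,4)`. A line inside `H` keeps at least
four of its five points; any other line is an affine line plus its point at infinity, so the
truncation is legal as soon as no affine line meets `A` in exactly three points and no line of
direction `e` meets `A` in exactly two (`LegalAffine e A`).

Such sets can be stacked: `{0} × A₀ ∪ {1} × A₁` is one in dimension one higher, since a line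
transversal to the two levels meets them at most twice. Hence a sum of `2k` sizes realisable in
`AG(j+1,4)` is a sum of `k` sizes realisable in `AG(j+2,4)`. Peeling off the leading base-4
digit, induction on `j` shows that `n` is a sum of `k` sizes realisable in `AG(j+1,4)` as soon as
`leafCost j n ≤ k 2^j`, and `n ≤ [d-1]₄/2` (in base 4, `n ≤ 22⋯2`) forces
`leafCost (d-1) n ≤ 2^(d-1)`.
-/

open Module Projectivization
open scoped Pointwise

lemma card_F4 : Nat.card F4 = 4 := by simpa using GaloisField.card 2 2 two_ne_zero

section LegalAffine

variable {V V' : Type*} [AddCommGroup V] [Module F4 V] [AddCommGroup V'] [Module F4 V']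

def LegalAffine (e : V) (A : Set V) : Prop :=
  ∀ a v : V, v ≠ 0 →
    {t : F4 | a + t • v ∈ A}.ncard ≠ 3 ∧ (v ∈ F4 ∙ e → {t : F4 | a + t • v ∈ A}.ncard ≠ 2)

lemma LegalAffine.of_subsingleton (e : V) {A : Set V} (hA : A.Subsingleton) : LegalAffine e A := by
  intro a v hv
  have : {t : F4 | a + t • v ∈ A}.ncard ≤ 1 := Set.ncard_le_one_iff_subsingleton.mpr <|
    hA.preimage ((add_right_injective a).comp (smul_left_injective F4 hv))
  omega

lemma LegalAffine.univ (e : V) : LegalAffine e (Set.univ : Set V) := by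
  intro a v _
  simp [Set.ncard_univ, card_F4]

lemma LegalAffine.stack {e : V} {A₀ A₁ : Set V} (h₀ : LegalAffine e A₀) (h₁ : LegalAffine e A₁) :
    LegalAffine ((0, e) : F4 × V) ({0} ×ˢ A₀ ∪ {1} ×ˢ A₁) := by
  rintro ⟨a₁, a₂⟩ ⟨v₁, v₂⟩ hv
  have mem (t : F4) : (a₁, a₂) + t • (v₁, v₂) ∈ ({0} ×ˢ A₀ ∪ {1} ×ˢ A₁ : Set (F4 × V)) ↔
      (a₁ + t * v₁ = 0 ∧ a₂ + t • v₂ ∈ A₀) ∨ (a₁ + t * v₁ = 1 ∧ a₂ + t • v₂ ∈ A₁) := by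
    simp
  simp only [mem]
  by_cases hv₁ : v₁ = 0
  · subst hv₁
    have hv₂ : v₂ ≠ 0 := fun h => hv (by simp [h])
    have hdir : (0, v₂) ∈ F4 ∙ ((0, e) : F4 × V) → v₂ ∈ F4 ∙ e := by
      simp only [Submodule.mem_span_singleton]
      exact fun ⟨c, hc⟩ => ⟨c, congrArg Prod.snd hc⟩
    by_cases ha₀ : a₁ = 0
    · simpa [ha₀] using (h₀ a₂ v₂ hv₂).imp id (· ∘ hdir)
    by_cases ha₁ : a₁ = 1
    · simpa [ha₁] using (h₁ a₂ v₂ hv₂).imp id (· ∘ hdir)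
    simp [ha₀, ha₁]
  · -- a line transversal to the levels meets each of the two levels `0` and `1` at most once
    have hle : {t : F4 | (a₁ + t * v₁ = 0 ∧ a₂ + t • v₂ ∈ A₀) ∨
        (a₁ + t * v₁ = 1 ∧ a₂ + t • v₂ ∈ A₁)}.ncard ≤ 2 := by
      refine (Set.ncard_le_ncard_of_injOn (t := {0, 1}) (fun t => a₁ + t * v₁) ?_ ?_).trans_eq
        (Set.ncard_pair zero_ne_one)
      · rintro t (⟨h, -⟩ | ⟨h, -⟩) <;> simp [h]
      · intro t _ s _ h
        simpa [hv₁] using h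
    refine ⟨by omega, fun hdir => absurd ?_ hv₁⟩
    obtain ⟨c, hc⟩ := Submodule.mem_span_singleton.mp hdir
    simpa using (congrArg Prod.fst hc).symm

lemma LegalAffine.map {e : V} {A : Set V} (h : LegalAffine e A) (φ : V ≃ₗ[F4] V') :
    LegalAffine (φ e) (φ '' A) := by
  intro a v hv
  have hline : {t : F4 | a + t • v ∈ φ '' A} = {t | φ.symm a + t • φ.symm v ∈ A} := by
    ext t
    simp [LinearEquiv.image_eq_preimage_symm]
  rw [hline]
  refine (h _ _ (by simpa using hv)).imp id fun h2 hdir => h2 ?_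
  obtain ⟨c, rfl⟩ := Submodule.mem_span_singleton.mp hdir
  simpa using Submodule.smul_mem _ c (Submodule.mem_span_singleton_self e)

def legalSizes (e : V) : Set ℕ := {n | ∃ A : Set V, LegalAffine e A ∧ A.ncard = n}

lemma zero_mem_legalSizes (e : V) : 0 ∈ legalSizes e :=
  ⟨∅, .of_subsingleton e Set.subsingleton_empty, Set.ncard_empty V⟩

lemma one_mem_legalSizes (e : V) : 1 ∈ legalSizes e :=
  ⟨{0}, .of_subsingleton e Set.subsingleton_singleton, Set.ncard_singleton 0⟩

lemma card_mem_legalSizes [Finite V] (e : V) : Nat.card V ∈ legalSizes e :=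
  ⟨Set.univ, .univ e, Set.ncard_univ V⟩

lemma legalSizes_map (e : V) (φ : V ≃ₗ[F4] V') : legalSizes e ⊆ legalSizes (φ e) := by
  rintro _ ⟨A, hA, rfl⟩
  exact ⟨φ '' A, hA.map φ, Set.ncard_image_of_injective A φ.injective⟩

lemma legalSizes_add_subset [Finite V] (e : V) :
    legalSizes e + legalSizes e ⊆ legalSizes ((0, e) : F4 × V) := by
  rintro _ ⟨_, ⟨A₀, h₀, rfl⟩, _, ⟨A₁, h₁, rfl⟩, rfl⟩
  refine ⟨_, h₀.stack h₁, ?_⟩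
  rw [Set.ncard_union_eq (Set.disjoint_prod.mpr (.inl (Set.disjoint_singleton.mpr zero_ne_one))),
    Set.ncard_prod, Set.ncard_prod]
  simp

end LegalAffine

lemma three_mul_bracket4_add_one (j : ℕ) : 3 * bracket4 j + 1 = 4 ^ (j + 1) := by
  have := geom_sum_mul_add 3 (j + 1)
  norm_num at this
  rw [bracket4, mul_comm, this]

lemma bracket4_succ (j : ℕ) : bracket4 (j + 1) = bracket4 j + 4 ^ (j + 1) :=
  Finset.sum_range_succ _ _

-- The number of leaves (copies of `AG(1,4)`) of a tree of stackings used when `n` is written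
-- greedily as a sum of full subspaces `AG(i+1,4)`, `i < j`, each filling `2^i` leaves, and of
-- single points filling one leaf each.
def leafCost : ℕ → ℕ → ℕ
  | 0, n => n
  | j + 1, n => n / 4 ^ (j + 1) * 2 ^ j + leafCost j (n % 4 ^ (j + 1))

lemma leafCost_le_of_lt {j n : ℕ} (h : n < 4 ^ (j + 1)) : leafCost j n ≤ 3 * 2 ^ j := by
  induction j generalizing n with
  | zero => simp only [leafCost]; omega
  | succ j ih =>
    have hq : n / 4 ^ (j + 1) ≤ 3 := by
      rw [Nat.le_iff_lt_add_one, Nat.div_lt_iff_lt_mul (by positivity)]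
      rw [pow_succ'] at h
      omega
    calc leafCost (j + 1) n = n / 4 ^ (j + 1) * 2 ^ j + leafCost j (n % 4 ^ (j + 1)) := rfl
      _ ≤ 3 * 2 ^ j + 3 * 2 ^ j := by gcongr; exact ih (Nat.mod_lt n (by positivity))
      _ = 3 * 2 ^ (j + 1) := by ring

lemma leafCost_le_of_two_mul_le_bracket4_succ {j n : ℕ} (h : 2 * n ≤ bracket4 (j + 1)) :
    leafCost j n ≤ 2 ^ (j + 1) := by
  induction j generalizing n with
  | zero => simp [bracket4] at h; simp only [leafCost]; omega
  | succ j ih =>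
    have hb := three_mul_bracket4_add_one (j + 1)
    rw [bracket4_succ, pow_succ' 4 (j + 1)] at h
    rw [pow_succ' 4 (j + 1)] at hb
    have hr := leafCost_le_of_lt (Nat.mod_lt n (by positivity : 0 < 4 ^ (j + 1)))
    have hrest := @ih (n % 4 ^ (j + 1))
    have hn := Nat.div_add_mod n (4 ^ (j + 1))
    show n / 4 ^ (j + 1) * 2 ^ j + leafCost j (n % 4 ^ (j + 1)) ≤ 2 ^ (j + 1 + 1)
    rw [show 2 ^ (j + 1 + 1) = 4 * 2 ^ j by ring]
    generalize 4 ^ (j + 1) = P at *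
    -- the leading base-4 digit `n / P` is at most `2`, and when it is `2` the rest is again at
    -- most `[j+1]₄ / 2`
    have hq : n / P ≤ 2 := by
      by_contra hq
      have : P * 3 ≤ P * (n / P) := Nat.mul_le_mul_left P (by omega)
      omega
    interval_cases n / P <;> omega

lemma leafCost_le_of_two_mul_le_bracket4 {j n : ℕ} (h : 2 * n ≤ bracket4 j) :
    leafCost j n ≤ 2 ^ j := by
  cases j with
  | zero => simp [bracket4] at h; simp [leafCost]; omega
  | succ j =>
    have hb := three_mul_bracket4_add_one (j + 1)
    have hn : n < 4 ^ (j + 1) := by rw [pow_succ] at hb; omega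
    show n / 4 ^ (j + 1) * 2 ^ j + leafCost j (n % 4 ^ (j + 1)) ≤ 2 ^ (j + 1)
    rw [Nat.div_eq_of_lt hn, Nat.mod_eq_of_lt hn, zero_mul, zero_add]
    exact leafCost_le_of_two_mul_le_bracket4_succ h

-- `k • S` is the `k`-fold sumset `S + ⋯ + S` (`Set.NSMul`), not the dilation `{k * s | s ∈ S}`.
lemma exists_mem_nsmul_legalSizes_of_leafCost_le (j : ℕ) : ∃ e : Fin (j + 1) → F4, e ≠ 0 ∧
    ∀ k n, leafCost j n ≤ k * 2 ^ j → n ∈ k • legalSizes e := by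
  induction j with
  | zero =>
    refine ⟨fun _ => 1, fun h => one_ne_zero (congrFun h 0), fun k n hn => ?_⟩
    have hn : n ≤ k := by simpa [leafCost] using hn
    have := Set.nsmul_mem_nsmul (n := n) (one_mem_legalSizes (fun _ : Fin 1 => (1 : F4)))
    exact Set.nsmul_subset_nsmul_right (zero_mem_legalSizes _) hn (by simpa using this)
  | succ j ih =>
    obtain ⟨e, he, hsizes⟩ := ih
    let φ := Fin.consLinearEquiv F4 fun _ : Fin (j + 2) => F4
    refine ⟨φ (0, e), by simpa using he, fun k n hn => ?_⟩
    -- `n` is `q` full copies of `AG(j+1,4)` plus a remainder `r` made of the other `2k - q`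
    -- pieces of dimension `j + 1`; pairs of pieces are then stacked
    set q := n / 4 ^ (j + 1)
    set r := n % 4 ^ (j + 1)
    have hcost : q * 2 ^ j + leafCost j r ≤ 2 * k * 2 ^ j :=
      hn.trans_eq (by ring)
    have hq : q ≤ 2 * k :=
      Nat.le_of_mul_le_mul_right ((Nat.le_add_right _ _).trans hcost) (by positivity)
    obtain ⟨l, hl⟩ := Nat.exists_eq_add_of_le hq
    have hr : r ∈ l • legalSizes e := hsizes l r (by rw [hl, add_mul] at hcost; omega)
    have hfull : q * 4 ^ (j + 1) ∈ q • legalSizes e := by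
      simpa [Nat.card_fun, card_F4] using Set.nsmul_mem_nsmul (n := q) (card_mem_legalSizes e)
    have hsum : n ∈ (2 * k) • legalSizes e := by
      rw [hl, add_nsmul, ← Nat.div_add_mod' n (4 ^ (j + 1))]
      exact Set.add_mem_add hfull hr
    rw [mul_nsmul, two_nsmul] at hsum
    exact Set.nsmul_subset_nsmul_left ((legalSizes_add_subset e).trans (legalSizes_map _ φ)) hsum

section Projective

variable {d : ℕ}

lemma mk_mem_pointsIn {v : Fin (d + 1) → F4} (hv : v ≠ 0) {W : Submodule F4 (Fin (d + 1) → F4)} :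
    mk F4 v hv ∈ pointsIn W ↔ v ∈ W := by
  simp [pointsIn, Submodule.span_singleton_le_iff_mem]

lemma pointsIn_span_singleton {v : Fin (d + 1) → F4} (hv : v ≠ 0) :
    pointsIn (F4 ∙ v) = {mk F4 v hv} := by
  ext p
  induction p using Projectivization.ind with
  | h w hw => simp [mk_mem_pointsIn, Submodule.mem_span_singleton, mk_eq_mk_iff']

lemma ncard_pointsIn {W : Submodule F4 (Fin (d + 1) → F4)} (hW : finrank F4 W = 2) :
    (pointsIn W).ncard = 5 := by
  have hrange : Set.range (map W.subtype W.injective_subtype) = pointsIn W := by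
    ext p
    induction p using Projectivization.ind with
    | h w hw =>
      simp only [Set.mem_range, mk_mem_pointsIn]
      constructor
      · rintro ⟨q, hq⟩
        induction q using Projectivization.ind with
        | h u hu =>
          rw [map_mk] at hq
          rw [← mk_mem_pointsIn hw, ← hq, mk_mem_pointsIn]
          exact u.2
      · intro hwW
        exact ⟨mk F4 ⟨w, hwW⟩ (by simpa using hw), by simp [map_mk]⟩
  rw [← hrange, Set.ncard_range_of_injective (map_injective _ _), card_of_finrank_two F4 W hW,
    card_F4]

lemma legalTrunc_of_ncard_inter_ne_three {D : Set (PGPoint d)}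
    (h : ∀ W : Submodule F4 (Fin (d + 1) → F4), finrank F4 W = 2 → (pointsIn W ∩ D).ncard ≠ 3) :
    LegalTrunc D := by
  rintro _ ⟨W, hW, rfl⟩ h2
  have := Set.ncard_inter_add_ncard_sdiff_eq_ncard (pointsIn W) D
  rw [ncard_pointsIn hW, h2] at this
  exact h W hW (by omega)

noncomputable def hyperplane (d : ℕ) : Submodule F4 (Fin (d + 1) → F4) :=
  LinearMap.ker (LinearMap.proj 0)

lemma mem_hyperplane {w : Fin (d + 1) → F4} : w ∈ hyperplane d ↔ w 0 = 0 := Iff.rfl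

lemma cons_zero_mem_hyperplane (x : Fin d → F4) : Fin.cons 0 x ∈ hyperplane d :=
  mem_hyperplane.mpr rfl

lemma finrank_hyperplane : finrank F4 (hyperplane d) = d := by
  have hproj : (LinearMap.proj 0 : (Fin (d + 1) → F4) →ₗ[F4] F4) ≠ 0 :=
    fun h => one_ne_zero (LinearMap.congr_fun h fun _ => 1)
  have := Module.Dual.finrank_ker_add_one_of_ne_zero hproj
  rw [finrank_fin_fun] at this
  exact Nat.add_right_cancel this

lemma isCoatom_hyperplane : IsCoatom (hyperplane d) :=
  LinearMap.isCoatom_ker_of_surjective fun c => ⟨fun _ => c, rfl⟩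

lemma cons_eq_zero_iff {c : F4} {x : Fin d → F4} :
    (Fin.cons c x : Fin (d + 1) → F4) = 0 ↔ c = 0 ∧ x = 0 :=
  Matrix.cons_eq_zero_iff

lemma cons_zero_ne_zero {e : Fin d → F4} (he : e ≠ 0) : (Fin.cons 0 e : Fin (d + 1) → F4) ≠ 0 :=
  fun h => he (cons_eq_zero_iff.mp h).2

lemma cons_one_sub_cons_one (x y : Fin d → F4) :
    (Fin.cons 1 x : Fin (d + 1) → F4) - Fin.cons 1 y = Fin.cons 0 (x - y) := by
  ext i; cases i using Fin.cases <;> simp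

lemma smul_cons_zero (c : F4) (x : Fin d → F4) :
    c • (Fin.cons 0 x : Fin (d + 1) → F4) = Fin.cons 0 (c • x) := by
  ext i; cases i using Fin.cases <;> simp

lemma exists_affineLine_of_not_le_hyperplane {W : Submodule F4 (Fin (d + 1) → F4)}
    (hW : finrank F4 W = 2) (hWH : ¬ W ≤ hyperplane d) :
    ∃ a v : Fin d → F4, v ≠ 0 ∧ (∀ x, Fin.cons 1 x ∈ W ↔ ∃ t : F4, a + t • v = x) ∧
      ∀ y, Fin.cons 0 y ∈ W ↔ ∃ c : F4, c • v = y := by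
  have hsup : W ⊔ hyperplane d = ⊤ :=
    isCoatom_hyperplane.2 _ (lt_of_le_of_ne le_sup_right fun h => hWH (h ▸ le_sup_left))
  have hinf : finrank F4 (W ⊓ hyperplane d : Submodule F4 _) = 1 := by
    have := Submodule.finrank_sup_add_finrank_inf_eq W (hyperplane d)
    rw [hsup, finrank_top, finrank_fin_fun, hW, finrank_hyperplane] at this
    omega
  obtain ⟨⟨h, hhW, hh0⟩, hne, hspan⟩ := finrank_eq_one_iff'.mp hinf
  have hh : Fin.cons 0 (Fin.tail h) = h := by
    rw [← mem_hyperplane.mp hh0]; exact Fin.cons_self_tail h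
  have hdir (y : Fin d → F4) : Fin.cons 0 y ∈ W ↔ ∃ c : F4, c • Fin.tail h = y := by
    constructor
    · intro hy
      obtain ⟨c, hc⟩ := hspan ⟨Fin.cons 0 y, hy, cons_zero_mem_hyperplane y⟩
      exact ⟨c, congrArg (fun w => Fin.tail w.1) hc⟩
    · rintro ⟨c, rfl⟩
      rw [← smul_cons_zero, hh]
      exact W.smul_mem c hhW
  obtain ⟨a, ha⟩ : ∃ a : Fin d → F4, Fin.cons 1 a ∈ W := by
    obtain ⟨w, hwW, hw0⟩ := SetLike.not_le_iff_exists.mp hWH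
    refine ⟨Fin.tail ((w 0)⁻¹ • w), ?_⟩
    have h1 : ((w 0)⁻¹ • w) 0 = 1 := inv_mul_cancel₀ (mem_hyperplane.not.mp hw0)
    rw [← h1, Fin.cons_self_tail]
    exact W.smul_mem _ hwW
  refine ⟨a, Fin.tail h, fun h0 => hne (Subtype.ext ?_), fun x => ?_, hdir⟩
  · change h = 0
    rw [← hh, h0]
    exact cons_eq_zero_iff.mpr ⟨rfl, rfl⟩
  · rw [← W.sub_mem_iff_left ha, cons_one_sub_cons_one, hdir]
    simp only [eq_sub_iff_add_eq']

noncomputable def affinePt (x : Fin d → F4) : PGPoint d :=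
  mk F4 (Fin.cons 1 x) (by simp [cons_eq_zero_iff])

noncomputable def infinitePt (e : Fin d → F4) (he : e ≠ 0) : PGPoint d :=
  mk F4 (Fin.cons 0 e) (cons_zero_ne_zero he)

lemma affinePt_injective : Function.Injective (affinePt (d := d)) := by
  intro x y hxy
  obtain ⟨c, hc⟩ := (mk_eq_mk_iff' _ _ _ _ _).mp hxy
  obtain rfl : c = 1 := by simpa using congrFun hc 0
  simpa using (congrArg Fin.tail hc).symm

lemma affinePt_mem_pointsIn {x : Fin d → F4} {W : Submodule F4 (Fin (d + 1) → F4)} :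
    affinePt x ∈ pointsIn W ↔ Fin.cons 1 x ∈ W :=
  mk_mem_pointsIn _

lemma infinitePt_mem_pointsIn {e : Fin d → F4} {he : e ≠ 0}
    {W : Submodule F4 (Fin (d + 1) → F4)} : infinitePt e he ∈ pointsIn W ↔ Fin.cons 0 e ∈ W :=
  mk_mem_pointsIn _

lemma affinePt_notMem_hyperplane (x : Fin d → F4) : affinePt x ∉ pointsIn (hyperplane d) := by
  rw [affinePt_mem_pointsIn, mem_hyperplane]
  exact one_ne_zero

lemma infinitePt_mem_hyperplane {e : Fin d → F4} (he : e ≠ 0) :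
    infinitePt e he ∈ pointsIn (hyperplane d) :=
  infinitePt_mem_pointsIn.mpr (cons_zero_mem_hyperplane e)

lemma ncard_pointsIn_inter_image_affinePt {W : Submodule F4 (Fin (d + 1) → F4)}
    {a v : Fin d → F4} (hv : v ≠ 0) (hline : ∀ x, Fin.cons 1 x ∈ W ↔ ∃ t : F4, a + t • v = x)
    (A : Set (Fin d → F4)) :
    (pointsIn W ∩ affinePt '' A).ncard = {t : F4 | a + t • v ∈ A}.ncard := by
  have : pointsIn W ∩ affinePt '' A =
      (fun t : F4 => affinePt (a + t • v)) '' {t | a + t • v ∈ A} := by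
    ext p
    constructor
    · rintro ⟨hpW, x, hx, rfl⟩
      obtain ⟨t, rfl⟩ := (hline x).mp (affinePt_mem_pointsIn.mp hpW)
      exact ⟨t, hx, rfl⟩
    · rintro ⟨t, ht, rfl⟩
      exact ⟨affinePt_mem_pointsIn.mpr ((hline _).mpr ⟨t, rfl⟩), _, ht, rfl⟩
  rw [this]
  exact Set.ncard_image_of_injective _
    (affinePt_injective.comp ((add_right_injective a).comp (smul_left_injective F4 hv)))

noncomputable def truncation (e : Fin d → F4) (he : e ≠ 0) (A : Set (Fin d → F4)) :
    Set (PGPoint d) :=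
  insert (infinitePt e he) (affinePt '' A)

section Truncation

variable {e : Fin d → F4} (he : e ≠ 0) {A : Set (Fin d → F4)}

lemma infinitePt_notMem_image : infinitePt e he ∉ affinePt '' A := by
  rintro ⟨x, -, hx⟩
  exact affinePt_notMem_hyperplane x (hx ▸ infinitePt_mem_hyperplane he)

lemma ncard_truncation : (truncation e he A).ncard = A.ncard + 1 := by
  rw [truncation, Set.ncard_insert_of_notMem (infinitePt_notMem_image he),
    Set.ncard_image_of_injective _ affinePt_injective]

lemma truncation_inter_hyperplane :
    truncation e he A ∩ pointsIn (hyperplane d) = pointsIn (F4 ∙ Fin.cons 0 e) := by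
  have : affinePt '' A ∩ pointsIn (hyperplane d) = ∅ := Set.eq_empty_iff_forall_notMem.mpr
    fun _ ⟨⟨x, _, hx⟩, hp⟩ => affinePt_notMem_hyperplane x (hx ▸ hp)
  rw [truncation, Set.insert_inter_of_mem (infinitePt_mem_hyperplane he), this,
    pointsIn_span_singleton (cons_zero_ne_zero he)]
  exact insert_empty_eq _

lemma legalTrunc_truncation (hA : LegalAffine e A) : LegalTrunc (truncation e he A) := by
  refine legalTrunc_of_ncard_inter_ne_three fun W hW => ?_
  by_cases hWH : W ≤ hyperplane d
  · have hsub : pointsIn W ∩ truncation e he A ⊆ {infinitePt e he} := by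
      rintro p ⟨hpW, rfl | ⟨x, -, rfl⟩⟩
      · rfl
      · exact absurd (le_trans hpW hWH) (affinePt_notMem_hyperplane x)
    have := Set.ncard_le_ncard hsub
    rw [Set.ncard_singleton] at this
    omega
  obtain ⟨a, v, hv, hline, hdir⟩ := exists_affineLine_of_not_le_hyperplane hW hWH
  obtain ⟨h3, h2⟩ := hA a v hv
  by_cases hP : infinitePt e he ∈ pointsIn W
  · have hve : v ∈ F4 ∙ e := by
      obtain ⟨c, hc⟩ := (hdir e).mp (infinitePt_mem_pointsIn.mp hP)
      have hc0 : c ≠ 0 := by rintro rfl; exact he (by simpa using hc.symm)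
      exact Submodule.mem_span_singleton.mpr
        ⟨c⁻¹, by rw [← hc, smul_smul, inv_mul_cancel₀ hc0, one_smul]⟩
    rw [truncation, Set.inter_insert_of_mem hP,
      Set.ncard_insert_of_notMem fun h => infinitePt_notMem_image he h.2,
      ncard_pointsIn_inter_image_affinePt hv hline]
    exact fun h => h2 hve (by omega)
  · rw [truncation, Set.inter_insert_of_notMem hP, ncard_pointsIn_inter_image_affinePt hv hline]
    exact h3

end Truncation

lemma ncard_mem_SS_zero {e : Fin d → F4} (he : e ≠ 0) {A : Set (Fin d → F4)}
    (hA : LegalAffine e A) : A.ncard ∈ SS d 0 := by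
  refine ⟨truncation e he A, legalTrunc_truncation he hA, ?_,
    hyperplane d, F4 ∙ (Fin.cons 0 e : Fin (d + 1) → F4), finrank_hyperplane, ?_, ?_, ?_⟩
  · simp [ncard_truncation he, bracket4]
  · exact finrank_span_singleton (cons_zero_ne_zero he)
  · exact (Submodule.span_singleton_le_iff_mem _ _).mpr (cons_zero_mem_hyperplane e)
  · exact truncation_inter_hyperplane he

end Projective

/-- Low values: for every `d ≥ 1`, every integer `n` with `0 ≤ n ≤ [d-1]₄ / 2` belongs to
`S(d,0)`; i.e. `PG_d(4)` admits a legal truncation removing `n + 1` points leaving a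
hyperplane with precisely one point removed. -/
theorem statement14 (d : ℕ) (hd : 1 ≤ d) (n : ℕ) (hn : 2 * n ≤ bracket4 (d - 1)) :
    n ∈ SS d 0 := by
  obtain ⟨j, rfl⟩ : ∃ j, d = j + 1 := ⟨d - 1, by omega⟩
  obtain ⟨e, he, hsizes⟩ := exists_mem_nsmul_legalSizes_of_leafCost_le j
  obtain ⟨A, hA, rfl⟩ : n ∈ legalSizes e := by
    simpa using hsizes 1 n (by simpa using leafCost_le_of_two_mul_le_bracket4 hn)
  exact ncard_mem_SS_zero he hA
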